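/- Let j₁, j₂ ∈ ℂ[z] be coprime polynomials with N := deg j₁ > deg j₂ =: M and N ≥ 1, suppose j = j₁/j₂ is unramified outside {0,1,∞} (every complex root of j₁′j₂ − j₁j₂′ is a root of j₁·j₂·(j₁−j₂)), let Λ be the monic radical of j₁j₂(j₁−j₂), and let α, β, γ ∈ ℂ. Let U ⊆ ℂ be open with j₁(z)·j₂(z)·(j₁(z)−j₂(z)) ≠ 0 for all z ∈ U, let V ⊆ ℂ \ {0,1} be open with j(U) ⊆ V, let Y be a solution of the hypergeometric equation with parameters α, β, γ on V, and let g : ℂ → ℂ be complex differentiable on U with g(z) ≠ 0 and g′(z) = −α·(j₂′(z)/j₂(z))·g(z) for all z ∈ U. Then the function y(z) := g(z)·Y(j(z)) satisfies on U the equation y″ + q₁·y′ + q₂·y = 0, where (writing A₁ = j₁′/j₁, A₂ = (j₁−j₂)′/(j₁−j₂), A₃ = j₂′/j₂) q₁ = Λ′/Λ + (γ−1)·A₁ + (−γ+α+β)·A₂ + (α−β)·A₃ and q₂ = αβ·A₁·A₂ − α·A₃·(A₃ − Λ′/Λ − (γ−β−1)·A₁ + (γ−α)·A₂) + α·j₂″/j₂.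 -/

import Mathlib

/-!
Write `W = j₁′j₂ − j₁j₂′ = wronskian j₂ j₁`, so that `j′ = W / j₂²`. At a root of multiplicity `m`
of one of `j₁`, `j₂`, `j₁ − j₂` the other two do not vanish (coprimality), and there `W` vanishes
to order exactly `m − 1`; by the ramification hypothesis `W` has no other roots. Hence `W · Λ` is
associated to `j₁ j₂ (j₁ − j₂)`, and logarithmic differentiation gives
`W′/W = A₁ + A₂ + A₃ − Λ′/Λ`.

The rest is the chain rule: `Y ∘ j` satisfies the pulled-back equation with coefficients
`P(j) j′ − j″/j′` and `Q(j) j′²`, multiplying by `g` with `g′ = −α A₃ g` shifts the coefficients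
in the usual way, and the two resulting identities of rational functions are checked by clearing
denominators.
-/

open Polynomial Filter Topology

namespace Polynomial

section Wronskian

variable {K : Type*} [Field K] [CharZero K]

theorem rootMultiplicity_wronskian_add_one {p q : K[X]} {t : K} (hp : p ≠ 0)
    (hpt : p.IsRoot t) (hqt : ¬q.IsRoot t) :
    (wronskian q p).rootMultiplicity t + 1 = p.rootMultiplicity t := by
  obtain ⟨k, hk⟩ := Nat.exists_eq_add_one.mpr ((rootMultiplicity_pos hp).2 hpt)
  obtain ⟨u, hpu, hut⟩ : ∃ u, p = (X - C t) ^ (k + 1) * u ∧ ¬u.IsRoot t :=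
    hk ▸ ⟨_, (pow_mul_divByMonic_rootMultiplicity_eq p t).symm,
      eval_divByMonic_pow_rootMultiplicity_ne_zero t hp⟩
  obtain ⟨B, hW, hBt⟩ : ∃ B, wronskian q p = B * (X - C t) ^ k ∧ ¬B.IsRoot t := by
    refine ⟨C ((k + 1 : ℕ) : K) * q * u + (X - C t) * wronskian q u, ?_, ?_⟩
    · rw [hpu]
      simp only [wronskian, derivative_mul, derivative_pow, derivative_X_sub_C]
      push_cast
      ring
    · simpa [IsRoot, Nat.cast_add_one_ne_zero] using ⟨hqt, hut⟩
  rw [hW, rootMultiplicity_mul_X_sub_C_pow (fun h => hBt (by simp [h])),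
    rootMultiplicity_eq_zero hBt, hk, zero_add]

theorem rootMultiplicity_wronskian_add_one_of_isRoot_mul {j₁ j₂ : K[X]} (hcop : IsCoprime j₁ j₂)
    (hR : j₁ * j₂ * (j₁ - j₂) ≠ 0) {t : K} (ht : (j₁ * j₂ * (j₁ - j₂)).IsRoot t) :
    (wronskian j₂ j₁).rootMultiplicity t + 1 = (j₁ * j₂ * (j₁ - j₂)).rootMultiplicity t := by
  have hcopt : ¬(j₁.IsRoot t ∧ j₂.IsRoot t) := by
    rintro ⟨h₁, h₂⟩
    simpa [h₁.eq_zero, h₂.eq_zero] using aeval_ne_zero_of_isCoprime hcop t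
  have h₁₂ : j₁ * j₂ ≠ 0 := left_ne_zero_of_mul hR
  rw [rootMultiplicity_mul hR, rootMultiplicity_mul h₁₂]
  simp only [IsRoot, eval_mul, eval_sub, mul_eq_zero, sub_eq_zero] at ht hcopt
  rcases ht with (h₁ | h₂) | h₃
  · have h₂ : ¬j₂.IsRoot t := fun h => hcopt ⟨h₁, h⟩
    have h₃ : ¬(j₁ - j₂).IsRoot t := by simpa [IsRoot, h₁, eq_comm] using h₂
    rw [rootMultiplicity_eq_zero h₂, rootMultiplicity_eq_zero h₃,
      ← rootMultiplicity_wronskian_add_one (left_ne_zero_of_mul h₁₂) h₁ h₂]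
  · have h₁ : ¬j₁.IsRoot t := fun h => hcopt ⟨h, h₂⟩
    have h₃ : ¬(j₁ - j₂).IsRoot t := by simpa [IsRoot, h₂] using h₁
    have hW : wronskian j₂ j₁ = wronskian (-j₁) j₂ := by
      rw [wronskian_neg_left, wronskian_neg_eq]
    rw [rootMultiplicity_eq_zero h₁, rootMultiplicity_eq_zero h₃, hW]
    simpa using rootMultiplicity_wronskian_add_one (q := -j₁) (right_ne_zero_of_mul h₁₂) h₂
      (by simpa using h₁)
  · have h₂ : ¬j₂.IsRoot t := fun h => hcopt ⟨h₃ ▸ h, h⟩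
    have h₁ : ¬j₁.IsRoot t := by simpa [IsRoot, h₃] using h₂
    have hW : wronskian j₂ j₁ = wronskian j₂ (j₁ - j₂) := by
      simp only [wronskian, derivative_sub]
      ring
    rw [rootMultiplicity_eq_zero h₁, rootMultiplicity_eq_zero h₂, hW]
    simpa using rootMultiplicity_wronskian_add_one (right_ne_zero_of_mul hR)
      (by simp [IsRoot, h₃]) h₂

theorem roots_wronskian_add_dedup_roots [DecidableEq K] {j₁ j₂ : K[X]} (hcop : IsCoprime j₁ j₂)
    (hR : j₁ * j₂ * (j₁ - j₂) ≠ 0)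
    (hunram : ∀ t, (wronskian j₂ j₁).IsRoot t → (j₁ * j₂ * (j₁ - j₂)).IsRoot t) :
    (wronskian j₂ j₁).roots + (j₁ * j₂ * (j₁ - j₂)).roots.dedup = (j₁ * j₂ * (j₁ - j₂)).roots := by
  ext t
  rw [Multiset.count_add, Multiset.count_dedup, count_roots, count_roots]
  split_ifs with ht <;> rw [mem_roots hR] at ht
  · exact rootMultiplicity_wronskian_add_one_of_isRoot_mul hcop hR ht
  · rw [rootMultiplicity_eq_zero ht, rootMultiplicity_eq_zero (mt (hunram t) ht)]

theorem associated_wronskian_mul_prod_roots [IsAlgClosed K] [DecidableEq K] {j₁ j₂ : K[X]}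
    (hcop : IsCoprime j₁ j₂) (hR : j₁ * j₂ * (j₁ - j₂) ≠ 0) (hW : wronskian j₂ j₁ ≠ 0)
    (hunram : ∀ t, (wronskian j₂ j₁).IsRoot t → (j₁ * j₂ * (j₁ - j₂)).IsRoot t) :
    Associated (wronskian j₂ j₁ * ∏ t ∈ (j₁ * j₂ * (j₁ - j₂)).roots.toFinset, (X - C t))
      (j₁ * j₂ * (j₁ - j₂)) := by
  have hΛ : ∏ t ∈ (j₁ * j₂ * (j₁ - j₂)).roots.toFinset, (X - C t) ≠ 0 :=
    (monic_prod_of_monic _ _ fun t _ => monic_X_sub_C t).ne_zero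
  rw [IsAlgClosed.associated_iff_roots_eq_roots (mul_ne_zero hW hΛ) hR, roots_mul
    (mul_ne_zero hW hΛ), roots_prod_X_sub_C, Multiset.toFinset_val]
  exact roots_wronskian_add_dedup_roots hcop hR hunram

end Wronskian

section LogDeriv

variable {𝕜 : Type*} [NontriviallyNormedField 𝕜]

theorem logDeriv_eval (p : 𝕜[X]) (x : 𝕜) :
    logDeriv (fun x => p.eval x) x = p.derivative.eval x / p.eval x := by
  rw [logDeriv_apply, Polynomial.deriv]

theorem hasDerivAt_eval_div_eval {p q : 𝕜[X]} {x : 𝕜} (hq : q.eval x ≠ 0) :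
    HasDerivAt (fun x => p.eval x / q.eval x) ((wronskian q p).eval x / q.eval x ^ 2) x :=
  ((p.hasDerivAt x).div (q.hasDerivAt x) hq).congr_deriv <| by
    simp only [wronskian, eval_sub, eval_mul]
    ring

theorem hasDerivAt_logDeriv_eval {p : 𝕜[X]} {x : 𝕜} (hp : p.eval x ≠ 0) :
    HasDerivAt (fun x => p.derivative.eval x / p.eval x)
      (p.derivative.derivative.eval x / p.eval x - (p.derivative.eval x / p.eval x) ^ 2) x :=
  (hasDerivAt_eval_div_eval hp).congr_deriv <| by
    simp only [wronskian, eval_sub, eval_mul]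
    field_simp

theorem logDeriv_eval_mul {p q : 𝕜[X]} {x : 𝕜} (hp : p.eval x ≠ 0) (hq : q.eval x ≠ 0) :
    logDeriv (fun x => (p * q).eval x) x =
      logDeriv (fun x => p.eval x) x + logDeriv (fun x => q.eval x) x := by
  simp only [eval_mul]
  exact logDeriv_mul x hp hq (p.differentiableAt) (q.differentiableAt)

theorem _root_.Associated.logDeriv_eval_eq {p q : 𝕜[X]} (h : Associated p q) :
    logDeriv (fun x => p.eval x) = logDeriv (fun x => q.eval x) := by
  obtain ⟨u, rfl⟩ := h
  obtain ⟨c, hc, hcu⟩ := Polynomial.isUnit_iff.mp u.isUnit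
  ext x
  simp only [← hcu, eval_mul, eval_C]
  exact (logDeriv_mul_const x c hc.ne_zero).symm

variable [IsAlgClosed 𝕜] [CharZero 𝕜] [DecidableEq 𝕜]

theorem logDeriv_wronskian_add_logDeriv_prod_roots {j₁ j₂ : 𝕜[X]} (hcop : IsCoprime j₁ j₂)
    (hunram : ∀ t, (wronskian j₂ j₁).IsRoot t → (j₁ * j₂ * (j₁ - j₂)).IsRoot t) {z : 𝕜}
    (hz : ¬(j₁ * j₂ * (j₁ - j₂)).IsRoot z) :
    logDeriv (fun x => (wronskian j₂ j₁).eval x) z +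
        logDeriv (fun x => (∏ t ∈ (j₁ * j₂ * (j₁ - j₂)).roots.toFinset, (X - C t)).eval x) z =
      j₁.derivative.eval z / j₁.eval z + j₂.derivative.eval z / j₂.eval z +
        (j₁ - j₂).derivative.eval z / (j₁ - j₂).eval z := by
  have hR : j₁ * j₂ * (j₁ - j₂) ≠ 0 := fun h => hz (by simp [h])
  have hWz : (wronskian j₂ j₁).eval z ≠ 0 := mt (hunram z) hz
  have hΛz : (∏ t ∈ (j₁ * j₂ * (j₁ - j₂)).roots.toFinset, (X - C t)).eval z ≠ 0 := by
    rw [eval_prod, Finset.prod_ne_zero_iff]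
    intro t ht
    rw [Multiset.mem_toFinset, mem_roots hR] at ht
    simpa [sub_eq_zero] using fun h : z = t => hz (h ▸ ht)
  have hz' : j₁.eval z * j₂.eval z ≠ 0 ∧ (j₁ - j₂).eval z ≠ 0 := by
    simpa [IsRoot, -eval_sub] using hz
  rw [← logDeriv_eval_mul hWz hΛz, (associated_wronskian_mul_prod_roots hcop hR
    (fun h => hWz (h ▸ eval_zero)) hunram).logDeriv_eval_eq,
    logDeriv_eval_mul (by simpa using hz'.1) hz'.2,
    logDeriv_eval_mul (left_ne_zero_of_mul hz'.1) (right_ne_zero_of_mul hz'.1),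
    logDeriv_eval, logDeriv_eval, logDeriv_eval]

theorem logDeriv_wronskian_div_sq {j₁ j₂ : 𝕜[X]} (hcop : IsCoprime j₁ j₂)
    (hunram : ∀ t, (wronskian j₂ j₁).IsRoot t → (j₁ * j₂ * (j₁ - j₂)).IsRoot t) {z : 𝕜}
    (hz : ¬(j₁ * j₂ * (j₁ - j₂)).IsRoot z) :
    logDeriv (fun w => (wronskian j₂ j₁).eval w / j₂.eval w ^ 2) z =
      j₁.derivative.eval z / j₁.eval z + (j₁ - j₂).derivative.eval z / (j₁ - j₂).eval z -
        j₂.derivative.eval z / j₂.eval z -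
        (∏ t ∈ (j₁ * j₂ * (j₁ - j₂)).roots.toFinset, (X - C t)).derivative.eval z /
          (∏ t ∈ (j₁ * j₂ * (j₁ - j₂)).roots.toFinset, (X - C t)).eval z := by
  have hb : j₂.eval z ≠ 0 := fun h => hz (by simp [IsRoot, h])
  have := logDeriv_wronskian_add_logDeriv_prod_roots hcop hunram hz
  rw [logDeriv_div (f := fun w => (wronskian j₂ j₁).eval w) (g := fun w => j₂.eval w ^ 2) z
    (mt (hunram z) hz) (pow_ne_zero 2 hb) (wronskian j₂ j₁).differentiableAt
    (j₂.differentiableAt.pow 2), logDeriv_fun_pow j₂.differentiableAt]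
  simp only [logDeriv_eval] at this ⊢
  push_cast
  linear_combination this

end LogDeriv

end Polynomial

section SecondOrder

variable {𝕜 : Type*} [NontriviallyNormedField 𝕜]

noncomputable def secondOrderOp (p q : 𝕜) (f : 𝕜 → 𝕜) (z : 𝕜) : 𝕜 :=
  deriv (deriv f) z + p * deriv f z + q * f z

theorem secondOrderOp_mul {g h u : 𝕜 → 𝕜} {z h' : 𝕜} (p q : 𝕜)
    (hg : ∀ᶠ w in 𝓝 z, HasDerivAt g (h w * g w) w) (hh : HasDerivAt h h' z)
    (hu : ∀ᶠ w in 𝓝 z, DifferentiableAt 𝕜 u w) (hu' : DifferentiableAt 𝕜 (deriv u) z) :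
    secondOrderOp p q (fun w => g w * u w) z =
      g z * secondOrderOp (p + 2 * h z) (q + h' + h z ^ 2 + p * h z) u z := by
  have hd : deriv (fun w => g w * u w) =ᶠ[𝓝 z] fun w => h w * g w * u w + g w * deriv u w := by
    filter_upwards [hg, hu] with w hgw huw
    exact (hgw.mul huw.hasDerivAt).deriv
  have hgz := hg.self_of_nhds
  have hdd := ((hh.fun_mul hgz).fun_mul hu.self_of_nhds.hasDerivAt).fun_add
    (hgz.fun_mul hu'.hasDerivAt)
  rw [secondOrderOp, secondOrderOp, hd.deriv_eq, hdd.deriv, hd.eq_of_nhds]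
  ring

theorem hasDerivAt_deriv_comp {Y j j' : 𝕜 → 𝕜} {z j'' : 𝕜}
    (hj : ∀ᶠ w in 𝓝 z, HasDerivAt j (j' w) w) (hj' : HasDerivAt j' j'' z)
    (hY : ∀ᶠ w in 𝓝 z, DifferentiableAt 𝕜 Y (j w)) (hY' : DifferentiableAt 𝕜 (deriv Y) (j z)) :
    HasDerivAt (deriv fun w => Y (j w)) (deriv (deriv Y) (j z) * j' z ^ 2 + deriv Y (j z) * j'')
      z := by
  have hd : deriv (fun w => Y (j w)) =ᶠ[𝓝 z] fun w => deriv Y (j w) * j' w := by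
    filter_upwards [hj, hY] with w hjw hYw
    exact (hYw.hasDerivAt.comp w hjw).deriv
  refine HasDerivAt.congr_of_eventuallyEq ?_ hd
  exact ((hY'.hasDerivAt.comp z hj.self_of_nhds).fun_mul hj').congr_deriv
    (by rw [Function.comp_apply]; ring)

theorem secondOrderOp_comp {Y j j' : 𝕜 → 𝕜} {z : 𝕜} (p q : 𝕜)
    (hj : ∀ᶠ w in 𝓝 z, HasDerivAt j (j' w) w) (hj' : DifferentiableAt 𝕜 j' z) (hj'0 : j' z ≠ 0)
    (hY : ∀ᶠ w in 𝓝 z, DifferentiableAt 𝕜 Y (j w)) (hY' : DifferentiableAt 𝕜 (deriv Y) (j z)) :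
    secondOrderOp (p * j' z - logDeriv j' z) (q * j' z ^ 2) (fun w => Y (j w)) z =
      j' z ^ 2 * secondOrderOp p q Y (j z) := by
  rw [secondOrderOp, secondOrderOp, (hasDerivAt_deriv_comp hj hj'.hasDerivAt hY hY').deriv,
    show deriv (fun w => Y (j w)) z = _ from
      (hY.self_of_nhds.hasDerivAt.comp z hj.self_of_nhds).deriv, logDeriv_apply]
  field_simp
  ring

theorem secondOrderOp_mul_comp {g h Y j j' : 𝕜 → 𝕜} {z h' p q P Q : 𝕜}
    (hg : ∀ᶠ w in 𝓝 z, HasDerivAt g (h w * g w) w) (hh : HasDerivAt h h' z)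
    (hj : ∀ᶠ w in 𝓝 z, HasDerivAt j (j' w) w) (hj' : DifferentiableAt 𝕜 j' z) (hj'0 : j' z ≠ 0)
    (hY : ∀ᶠ w in 𝓝 z, DifferentiableAt 𝕜 Y (j w)) (hY' : DifferentiableAt 𝕜 (deriv Y) (j z))
    (hp : p + 2 * h z = P * j' z - logDeriv j' z) (hq : q + h' + h z ^ 2 + p * h z = Q * j' z ^ 2) :
    secondOrderOp p q (fun w => g w * Y (j w)) z = g z * j' z ^ 2 * secondOrderOp P Q Y (j z) := by
  have hu : ∀ᶠ w in 𝓝 z, DifferentiableAt 𝕜 (fun w => Y (j w)) w := by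
    filter_upwards [hj, hY] with w hjw hYw
    exact (hYw.hasDerivAt.comp w hjw).differentiableAt
  rw [secondOrderOp_mul p q hg hh hu
    (hasDerivAt_deriv_comp hj hj'.hasDerivAt hY hY').differentiableAt, hp, hq,
    secondOrderOp_comp P Q hj hj' hj'0 hY hY', mul_assoc]

end SecondOrder

section Hypergeometric

variable {K : Type*} [Field K]

def hypergeometricP (α β γ w : K) : K := (γ - (α + β + 1) * w) / (w * (1 - w))

def hypergeometricQ (α β w : K) : K := α * β / (w * (w - 1))

variable {a b a' b' : K}

theorem hypergeometricP_div_mul (ha : a ≠ 0) (hb : b ≠ 0) (hab : a - b ≠ 0) (α β γ : K) :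
    hypergeometricP α β γ (a / b) * ((b * a' - b' * a) / b ^ 2) =
      γ * (a' / a - (a' - b') / (a - b)) + (α + β + 1) * ((a' - b') / (a - b) - b' / b) := by
  have hba : b - a ≠ 0 := by rwa [← neg_sub, neg_ne_zero]
  unfold hypergeometricP
  field_simp
  ring

theorem hypergeometricQ_div_mul_sq (ha : a ≠ 0) (hb : b ≠ 0) (hab : a - b ≠ 0) (α β : K) :
    hypergeometricQ α β (a / b) * ((b * a' - b' * a) / b ^ 2) ^ 2 =
      α * β * (a' / a - b' / b) * ((a' - b') / (a - b) - b' / b) := by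
  unfold hypergeometricQ
  field_simp
  ring

end Hypergeometric

theorem belyi_pullback_heun_general
    (j₁ j₂ : Polynomial ℂ)
    (hcop : IsCoprime j₁ j₂)
    (hunram : ∀ z : ℂ, (derivative j₁ * j₂ - j₁ * derivative j₂).IsRoot z →
      (j₁ * j₂ * (j₁ - j₂)).IsRoot z)
    (Λ : Polynomial ℂ)
    (hΛ : Λ = ∏ t ∈ (j₁ * j₂ * (j₁ - j₂)).roots.toFinset, (X - C t))
    (α β γ : ℂ)
    (j : ℂ → ℂ) (hj : j = fun z => j₁.eval z / j₂.eval z)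
    (U V : Set ℂ) (hU : IsOpen U)
    (hUreg : ∀ z ∈ U, j₁.eval z * j₂.eval z * (j₁.eval z - j₂.eval z) ≠ 0)
    (hjUV : ∀ z ∈ U, j z ∈ V)
    (Y : ℂ → ℂ)
    (hY₁ : ∀ w ∈ V, DifferentiableAt ℂ Y w)
    (hY₂ : ∀ w ∈ V, DifferentiableAt ℂ (deriv Y) w)
    (hYhyp : ∀ w ∈ V,
      deriv (deriv Y) w + ((γ - (α + β + 1) * w) / (w * (1 - w))) * deriv Y w
        + (α * β / (w * (w - 1))) * Y w = 0)
    (g : ℂ → ℂ)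
    (hg₁ : ∀ z ∈ U, DifferentiableAt ℂ g z)
    (hg : ∀ z ∈ U, deriv g z = -α * ((j₂.derivative.eval z) / (j₂.eval z)) * g z)
    (y : ℂ → ℂ) (hy : y = fun z => g z * Y (j z))
    (A₁ A₂ A₃ LΛ q₁ q₂ : ℂ → ℂ)
    (hA₁ : A₁ = fun z => (j₁.derivative.eval z) / (j₁.eval z))
    (hA₂ : A₂ = fun z => ((j₁ - j₂).derivative.eval z) / ((j₁ - j₂).eval z))
    (hA₃ : A₃ = fun z => (j₂.derivative.eval z) / (j₂.eval z))
    (hLΛ : LΛ = fun z => (Λ.derivative.eval z) / (Λ.eval z))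
    (hq₁ : q₁ = fun z =>
      LΛ z + (γ - 1) * A₁ z + (-γ + α + β) * A₂ z + (α - β) * A₃ z)
    (hq₂ : q₂ = fun z =>
      α * β * A₁ z * A₂ z
        - α * A₃ z * (A₃ z - LΛ z - (γ - β - 1) * A₁ z + (γ - α) * A₂ z)
        + α * ((j₂.derivative.derivative.eval z) / (j₂.eval z))) :
    ∀ z ∈ U, deriv (deriv y) z + q₁ z * deriv y z + q₂ z * y z = 0 := by
  intro z hz
  subst hy hA₁ hA₂ hA₃ hLΛ hΛ
  have hunram' : ∀ t, (wronskian j₂ j₁).IsRoot t → (j₁ * j₂ * (j₁ - j₂)).IsRoot t := by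
    simpa only [wronskian, mul_comm, sub_eq_neg_add] using hunram
  obtain ⟨⟨ha, hb⟩, hab⟩ : (j₁.eval z ≠ 0 ∧ j₂.eval z ≠ 0) ∧ j₁.eval z - j₂.eval z ≠ 0 := by
    simpa using hUreg z hz
  have hRz : ¬(j₁ * j₂ * (j₁ - j₂)).IsRoot z := by simpa [IsRoot] using hUreg z hz
  have hU' : ∀ᶠ w in 𝓝 z, w ∈ U := hU.mem_nhds hz
  have hj' : ∀ᶠ w in 𝓝 z, HasDerivAt j ((wronskian j₂ j₁).eval w / j₂.eval w ^ 2) w :=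
    hU'.mono fun w hw => hj ▸ hasDerivAt_eval_div_eval
      (right_ne_zero_of_mul (left_ne_zero_of_mul (hUreg w hw)))
  have hYj :
      secondOrderOp (hypergeometricP α β γ (j z)) (hypergeometricQ α β (j z)) Y (j z) = 0 :=
    hYhyp (j z) (hjUV z hz)
  change secondOrderOp (q₁ z) (q₂ z) (fun w => g w * Y (j w)) z = 0
  refine (secondOrderOp_mul_comp (P := hypergeometricP α β γ (j z))
    (Q := hypergeometricQ α β (j z)) (hU'.mono fun w hw => hg w hw ▸ (hg₁ w hw).hasDerivAt)
    ((hasDerivAt_logDeriv_eval hb).const_mul (-α)) hj'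
    ((wronskian j₂ j₁).differentiableAt.div (j₂.differentiableAt.pow 2) (pow_ne_zero 2 hb))
    (div_ne_zero (mt (hunram' z) hRz) (pow_ne_zero 2 hb))
    (hU'.mono fun w hw => hY₁ _ (hjUV w hw)) (hY₂ _ (hjUV z hz)) ?_ ?_).trans ?_
  · rw [logDeriv_wronskian_div_sq hcop hunram' hRz, hj]
    simp only [hq₁, wronskian, eval_sub, eval_mul, derivative_sub,
      hypergeometricP_div_mul ha hb hab]
    ring
  · rw [hj]
    simp only [hq₁, hq₂, wronskian, eval_sub, eval_mul, derivative_sub,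
      hypergeometricQ_div_mul_sq ha hb hab]
    ring
  · rw [hYj, mul_zero]

/-- Theorem 1: for a rational Belyi function `j = j₁/j₂` unramified outside
`{0,1,∞}`, the function `g·(Y ∘ j)` (a lift of `j₂^{−α}·₂F₁(α,β,γ; j)`) satisfies
the second order equation `y″ + q₁·y′ + q₂·y = 0` with the explicit coefficients
`q₁ = Λ′/Λ + (γ−1)A₁ + (−γ+α+β)A₂ + (α−β)A₃` and
`q₂ = αβ·A₁A₂ − α·A₃·(A₃ − Λ′/Λ − (γ−β−1)A₁ + (γ−α)A₂) + α·j₂″/j₂`,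
where `A₁ = j₁′/j₁`, `A₂ = (j₁−j₂)′/(j₁−j₂)`, `A₃ = j₂′/j₂`. -/
theorem belyi_pullback_heun
    (j₁ j₂ : Polynomial ℂ)
    (hcop : IsCoprime j₁ j₂)
    (hdeg : j₂.degree < j₁.degree)
    (hN : 1 ≤ j₁.natDegree)
    (hunram : ∀ z : ℂ, (derivative j₁ * j₂ - j₁ * derivative j₂).IsRoot z →
      (j₁ * j₂ * (j₁ - j₂)).IsRoot z)
    (Λ : Polynomial ℂ)
    (hΛ : Λ = ∏ t ∈ (j₁ * j₂ * (j₁ - j₂)).roots.toFinset, (X - C t))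
    (α β γ : ℂ)
    (j : ℂ → ℂ) (hj : j = fun z => j₁.eval z / j₂.eval z)
    (U V : Set ℂ) (hU : IsOpen U) (hV : IsOpen V)
    (hUreg : ∀ z ∈ U, j₁.eval z * j₂.eval z * (j₁.eval z - j₂.eval z) ≠ 0)
    (hV01 : ∀ w ∈ V, w ≠ 0 ∧ w ≠ 1)
    (hjUV : ∀ z ∈ U, j z ∈ V)
    (Y : ℂ → ℂ)
    (hY₁ : ∀ w ∈ V, DifferentiableAt ℂ Y w)
    (hY₂ : ∀ w ∈ V, DifferentiableAt ℂ (deriv Y) w)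
    (hYhyp : ∀ w ∈ V,
      deriv (deriv Y) w + ((γ - (α + β + 1) * w) / (w * (1 - w))) * deriv Y w
        + (α * β / (w * (w - 1))) * Y w = 0)
    (g : ℂ → ℂ)
    (hg₁ : ∀ z ∈ U, DifferentiableAt ℂ g z)
    (hg₀ : ∀ z ∈ U, g z ≠ 0)
    (hg : ∀ z ∈ U, deriv g z = -α * ((j₂.derivative.eval z) / (j₂.eval z)) * g z)
    (y : ℂ → ℂ) (hy : y = fun z => g z * Y (j z))
    (A₁ A₂ A₃ LΛ q₁ q₂ : ℂ → ℂ)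
    (hA₁ : A₁ = fun z => (j₁.derivative.eval z) / (j₁.eval z))
    (hA₂ : A₂ = fun z => ((j₁ - j₂).derivative.eval z) / ((j₁ - j₂).eval z))
    (hA₃ : A₃ = fun z => (j₂.derivative.eval z) / (j₂.eval z))
    (hLΛ : LΛ = fun z => (Λ.derivative.eval z) / (Λ.eval z))
    (hq₁ : q₁ = fun z =>
      LΛ z + (γ - 1) * A₁ z + (-γ + α + β) * A₂ z + (α - β) * A₃ z)
    (hq₂ : q₂ = fun z =>
      α * β * A₁ z * A₂ z
        - α * A₃ z * (A₃ z - LΛ z - (γ - β - 1) * A₁ z + (γ - α) * A₂ z)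
        + α * ((j₂.derivative.derivative.eval z) / (j₂.eval z))) :
    ∀ z ∈ U, deriv (deriv y) z + q₁ z * deriv y z + q₂ z * y z = 0 :=
  belyi_pullback_heun_general j₁ j₂ hcop hunram Λ hΛ α β γ j hj U V hU hUreg hjUV Y hY₁ hY₂ hYhyp g
    hg₁ hg y hy A₁ A₂ A₃ LΛ q₁ q₂ hA₁ hA₂ hA₃ hLΛ hq₁ hq₂
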